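/- arXiv:2602.03204 — 5 statements merged into one kernel-verified Lean document; each statement's English description precedes it below -/
import Mathlib

section
/- Let N ≥ 1, 1 ≤ k ≤ N, d ≥ 1, and let z_1, …, z_N : ℝ^d → ℝ be affine maps. For every subset I ⊆ {1, …, N} with |I| = k, the Top-k routing cell V(I) is a closed convex set, and it equals the intersection of the k(N − k) closed half-spaces {x ∈ ℝ^d : z_u(x) − z_v(x) ≥ 0} over all pairs u ∈ I, v ∉ I. -/
/-- The Top-k routing cell `V(I)` of a family of affine logits `z`. -/
def cell {N d : ℕ} (z : Fin N → ((Fin d → ℝ) →ᵃ[ℝ] ℝ)) (k : ℕ)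
    (I : Finset (Fin N)) : Set (Fin d → ℝ) :=
  {x | ∀ J : Finset (Fin N), J.card = k → ∑ j ∈ J, z j x ≤ ∑ i ∈ I, z i x}

lemma cell_eq_halfspaces {N k d : ℕ}
    (z : Fin N → ((Fin d → ℝ) →ᵃ[ℝ] ℝ))
    (I : Finset (Fin N)) (hI : I.card = k) :
    cell z k I = ⋂ u ∈ I, ⋂ v ∈ Iᶜ, {x : Fin d → ℝ | 0 ≤ z u x - z v x} := by
  ext x
  simp only [cell, Set.mem_setOf_eq, Set.mem_iInter, Finset.mem_compl, sub_nonneg]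
  constructor
  · intro hx u hu v hv
    set J : Finset (Fin N) := insert v (I.erase u) with hJ
    have hvI : v ∉ I.erase u := fun h => hv (Finset.mem_of_mem_erase h)
    have hJcard : J.card = k := by
      rw [hJ, Finset.card_insert_of_notMem hvI, Finset.card_erase_of_mem hu, hI]
      have : 1 ≤ k := by
        rw [← hI]; exact Finset.card_pos.mpr ⟨u, hu⟩
      omega
    have h := hx J hJcard
    rw [hJ, Finset.sum_insert hvI] at h
    have hIsum : ∑ i ∈ I, z i x = z u x + ∑ i ∈ I.erase u, z i x :=
      (Finset.add_sum_erase I (fun i => z i x) hu).symm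
    rw [hIsum] at h
    linarith
  · intro hx J hJ
    have hcard : (J \ I).card = (I \ J).card := by
      have h1 := Finset.card_sdiff_add_card_inter J I
      have h2 := Finset.card_sdiff_add_card_inter I J
      rw [Finset.inter_comm] at h2
      omega
    have key : ∑ j ∈ J \ I, z j x ≤ ∑ i ∈ I \ J, z i x := by
      let e := Finset.equivOfCardEq hcard
      calc ∑ j ∈ J \ I, z j x = ∑ a : (J \ I : Finset (Fin N)), z a x :=
            (Finset.sum_coe_sort (J \ I) (fun i => z i x)).symm
        _ ≤ ∑ a : (J \ I : Finset (Fin N)), z (e a) x := by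
            apply Finset.sum_le_sum
            intro a _
            have ha : (a : Fin N) ∉ I := (Finset.mem_sdiff.mp a.2).2
            have hea : ((e a : Fin N)) ∈ I := (Finset.mem_sdiff.mp (e a).2).1
            exact hx _ hea _ ha
        _ = ∑ b : (I \ J : Finset (Fin N)), z b x := Equiv.sum_comp e (fun b => z b x)
        _ = ∑ i ∈ I \ J, z i x := Finset.sum_coe_sort (I \ J) (fun i => z i x)
    have hJsplit := Finset.sum_inter_add_sum_sdiff J I (fun i => z i x)
    have hIsplit := Finset.sum_inter_add_sum_sdiff I J (fun i => z i x)
    rw [Finset.inter_comm] at hIsplit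
    linarith

/-- each Top-k routing cell `V(I)` is closed and convex, and it equals
the intersection of the `k(N-k)` closed half-spaces `{x : z_u(x) - z_v(x) ≥ 0}`
over all pairs `u ∈ I`, `v ∉ I`. -/
theorem topk_cell_closed_convex_halfspaces {N k d : ℕ}
    (hN : 1 ≤ N) (hk1 : 1 ≤ k) (hkN : k ≤ N) (hd : 1 ≤ d)
    (z : Fin N → ((Fin d → ℝ) →ᵃ[ℝ] ℝ))
    (I : Finset (Fin N)) (hI : I.card = k) :
    IsClosed (cell z k I) ∧ Convex ℝ (cell z k I) ∧
    (cell z k I = ⋂ u ∈ I, ⋂ v ∈ Iᶜ, {x : Fin d → ℝ | 0 ≤ z u x - z v x}) ∧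
    (I ×ˢ Iᶜ).card = k * (N - k) := by
  have heq := cell_eq_halfspaces z I hI
  have hset : ∀ u v : Fin N, {x : Fin d → ℝ | 0 ≤ z u x - z v x}
      = (z u - z v) ⁻¹' Set.Ici 0 := by
    intro u v; rfl
  refine ⟨?_, ?_, heq, ?_⟩
  · rw [heq]
    refine isClosed_biInter fun u _ => isClosed_biInter fun v _ => ?_
    rw [hset u v]
    exact isClosed_Ici.preimage (z u - z v).continuous_of_finiteDimensional
  · rw [heq]
    refine convex_iInter₂ fun u _ => convex_iInter₂ fun v _ => ?_
    rw [hset u v]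
    exact (convex_Ici (0:ℝ)).affine_preimage (z u - z v)
  · rw [Finset.card_product, hI, Finset.card_compl, hI, Fintype.card_fin]
end

section
/- Let N ≥ 1, 1 ≤ k ≤ N, d ≥ 1, and let z_1, …, z_N : ℝ^d → ℝ be affine maps. For every subset I ⊆ {1, …, N} with |I| = k, the Top-k routing cell V(I) equals the union, over all permutations σ of {1, …, N} whose image of {1, …, k} is exactly I, of the ordered chambers C(σ) := {x ∈ ℝ^d : z_{σ(1)}(x) ≥ z_{σ(2)}(x) ≥ … ≥ z_{σ(N)}(x)}; moreover the number of such permutations is exactly k!·(N − k)!. -/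
/-- The ordered chamber of a permutation `σ`:
the set of inputs where `z_{σ(1)}(x) ≥ z_{σ(2)}(x) ≥ … ≥ z_{σ(N)}(x)`. -/
def chamber {N d : ℕ} (z : Fin N → ((Fin d → ℝ) →ᵃ[ℝ] ℝ)) (σ : Equiv.Perm (Fin N)) :
    Set (Fin d → ℝ) :=
  {x | ∀ a b : Fin N, a ≤ b → z (σ b) x ≤ z (σ a) x}

section Aux

variable {N k : ℕ}

/-- The first `k` indices of `Fin N`. -/
def firstK (N k : ℕ) : Finset (Fin N) :=
  Finset.univ.filter (fun m : Fin N => (m : ℕ) < k)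

lemma mem_firstK {m : Fin N} : m ∈ firstK N k ↔ (m : ℕ) < k := by
  simp [firstK]

lemma card_firstK (hkN : k ≤ N) : (firstK N k).card = k := by
  apply Finset.card_eq_of_bijective (fun i hi => ⟨i, lt_of_lt_of_le hi hkN⟩)
  · intro a ha
    exact ⟨a, mem_firstK.mp ha, rfl⟩
  · intro i hi
    exact mem_firstK.mpr hi
  · intro i j hi hj h
    simpa using congrArg Fin.val h

variable (I : Finset (Fin N)) (hI : I.card = k)

include hI in
lemma card_compl_I : Iᶜ.card = N - k := by
  rw [Finset.card_compl, hI, Fintype.card_fin]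

/-- The underlying function of the permutation built from sortings of `I` and `Iᶜ`. -/
def mkFun (τ₁ : Equiv.Perm (Fin k)) (τ₂ : Equiv.Perm (Fin (N - k))) : Fin N → Fin N :=
  fun m =>
    if h : (m : ℕ) < k then (I.orderIsoOfFin hI (τ₁ ⟨m, h⟩) : Fin N)
    else (Iᶜ.orderIsoOfFin (card_compl_I I hI) (τ₂ ⟨(m : ℕ) - k,
      by have := m.isLt; omega⟩) : Fin N)

lemma mkFun_injective (τ₁ : Equiv.Perm (Fin k)) (τ₂ : Equiv.Perm (Fin (N - k))) :
    Function.Injective (mkFun I hI τ₁ τ₂) := by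
  intro m m' h
  unfold mkFun at h
  split_ifs at h with h1 h2 h2
  · have := (I.orderIsoOfFin hI).injective (Subtype.coe_injective h)
    have := τ₁.injective this
    have := congrArg Fin.val this
    simp at this
    exact Fin.ext this
  · exfalso
    have hmem : ((I.orderIsoOfFin hI (τ₁ ⟨m, h1⟩)) : Fin N) ∈ I :=
      (I.orderIsoOfFin hI (τ₁ ⟨m, h1⟩)).2
    rw [h] at hmem
    exact (Finset.mem_compl.mp (Finset.coe_mem _)) hmem
  · exfalso
    have hmem : ((I.orderIsoOfFin hI (τ₁ ⟨m', h2⟩)) : Fin N) ∈ I :=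
      (I.orderIsoOfFin hI (τ₁ ⟨m', h2⟩)).2
    rw [← h] at hmem
    exact (Finset.mem_compl.mp (Finset.coe_mem _)) hmem
  · have := (Iᶜ.orderIsoOfFin (card_compl_I I hI)).injective (Subtype.coe_injective h)
    have := τ₂.injective this
    have := congrArg Fin.val this
    simp at this
    exact Fin.ext (by omega)

/-- The permutation built from sortings of `I` and `Iᶜ`. -/
noncomputable def mkPerm (τ₁ : Equiv.Perm (Fin k)) (τ₂ : Equiv.Perm (Fin (N - k))) : Equiv.Perm (Fin N) :=
  Equiv.ofBijective _ (Finite.injective_iff_bijective.mp (mkFun_injective I hI τ₁ τ₂))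

lemma mkPerm_apply (τ₁ : Equiv.Perm (Fin k)) (τ₂ : Equiv.Perm (Fin (N - k))) (m : Fin N) :
    mkPerm I hI τ₁ τ₂ m = mkFun I hI τ₁ τ₂ m := rfl

lemma mkPerm_image (hkN : k ≤ N) (τ₁ : Equiv.Perm (Fin k)) (τ₂ : Equiv.Perm (Fin (N - k))) :
    (firstK N k).image (fun m => mkPerm I hI τ₁ τ₂ m) = I := by
  apply Finset.eq_of_subset_of_card_le
  · intro y hy
    obtain ⟨m, hm, rfl⟩ := Finset.mem_image.mp hy
    have hmk := mem_firstK.mp hm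
    rw [mkPerm_apply, mkFun, dif_pos hmk]
    exact (I.orderIsoOfFin hI (τ₁ ⟨m, hmk⟩)).2
  · rw [hI, Finset.card_image_of_injective _ (mkPerm I hI τ₁ τ₂).injective,
      card_firstK hkN]

end Aux

/-- Key exchange argument: in the cell, every coordinate of `I` dominates every
coordinate outside `I`. -/
lemma cell_key {N k d : ℕ} (hk1 : 1 ≤ k)
    (z : Fin N → ((Fin d → ℝ) →ᵃ[ℝ] ℝ)) (I : Finset (Fin N)) (hI : I.card = k)
    {x : Fin d → ℝ} (hx : x ∈ cell z k I) :
    ∀ i ∈ I, ∀ j ∉ I, z j x ≤ z i x := by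
  intro i hi j hj
  have hjE : j ∉ I.erase i := fun h => hj (Finset.mem_of_mem_erase h)
  have hJcard : (insert j (I.erase i)).card = k := by
    rw [Finset.card_insert_of_notMem hjE, Finset.card_erase_of_mem hi, hI]
    omega
  have h := hx (insert j (I.erase i)) hJcard
  rw [Finset.sum_insert hjE] at h
  have hsplit : ∑ m ∈ I.erase i, z m x + z i x = ∑ m ∈ I, z m x :=
    Finset.sum_erase_add I _ hi
  linarith

/-- Chamber membership with matching image implies domination of all k-subsets. -/
lemma chamber_sum_le {N k d : ℕ} (hk1 : 1 ≤ k) (hkN : k ≤ N)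
    (z : Fin N → ((Fin d → ℝ) →ᵃ[ℝ] ℝ)) (I : Finset (Fin N)) (hI : I.card = k)
    (σ : Equiv.Perm (Fin N))
    (hσ : (firstK N k).image (fun m => σ m) = I)
    {x : Fin d → ℝ} (hx : x ∈ chamber z σ)
    (J : Finset (Fin N)) (hJ : J.card = k) :
    ∑ j ∈ J, z j x ≤ ∑ i ∈ I, z i x := by
  have hkm1 : k - 1 < N := by omega
  set c := z (σ ⟨k - 1, hkm1⟩) x with hc
  have hIlb : ∀ i ∈ I, c ≤ z i x := by
    intro i hi
    rw [← hσ] at hi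
    obtain ⟨a, ha, rfl⟩ := Finset.mem_image.mp hi
    have hak : (a : ℕ) < k := mem_firstK.mp ha
    exact hx a ⟨k - 1, hkm1⟩ (by simp [Fin.le_def]; omega)
  have hub : ∀ j ∉ I, z j x ≤ c := by
    intro j hj
    have : σ (σ.symm j) = j := σ.apply_symm_apply j
    have hnot : ¬ ((σ.symm j : ℕ) < k) := by
      intro hlt
      apply hj
      rw [← hσ]
      exact Finset.mem_image.mpr ⟨σ.symm j, mem_firstK.mpr hlt, this⟩
    calc z j x = z (σ (σ.symm j)) x := by rw [this]
      _ ≤ c := hx ⟨k - 1, hkm1⟩ (σ.symm j) (by simp [Fin.le_def]; omega)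
  -- split sums over the intersection
  have hsub1 : J ∩ I ⊆ J := Finset.inter_subset_left
  have hsub2 : I ∩ J ⊆ I := Finset.inter_subset_left
  have e1 : ∑ j ∈ J, z j x = ∑ j ∈ J \ I, z j x + ∑ j ∈ J ∩ I, z j x := by
    rw [← Finset.sum_sdiff hsub1, Finset.sdiff_inter_self_left]
  have e2 : ∑ i ∈ I, z i x = ∑ i ∈ I \ J, z i x + ∑ i ∈ I ∩ J, z i x := by
    rw [← Finset.sum_sdiff hsub2, Finset.sdiff_inter_self_left]
  have hinter : ∑ j ∈ J ∩ I, z j x = ∑ i ∈ I ∩ J, z i x := by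
    rw [Finset.inter_comm]
  have hcard : (J \ I).card = (I \ J).card := Finset.card_sdiff_comm (by rw [hJ, hI])
  have h1 : ∑ j ∈ J \ I, z j x ≤ (J \ I).card • c := by
    apply Finset.sum_le_card_nsmul
    intro j hj
    exact hub j (Finset.mem_sdiff.mp hj).2
  have h2 : (I \ J).card • c ≤ ∑ i ∈ I \ J, z i x := by
    apply Finset.card_nsmul_le_sum
    intro i hi
    exact hIlb i (Finset.mem_sdiff.mp hi).1
  rw [e1, e2, hinter]
  have : ∑ j ∈ J \ I, z j x ≤ ∑ i ∈ I \ J, z i x := by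
    calc ∑ j ∈ J \ I, z j x ≤ (J \ I).card • c := h1
      _ = (I \ J).card • c := by rw [hcard]
      _ ≤ ∑ i ∈ I \ J, z i x := h2
  linarith

/-- the Top-k routing cell `V(I)` is the union of the ordered chambers
`C(σ)` over all permutations `σ` whose image of the first `k` indices is exactly `I`;
moreover the number of such permutations is exactly `k! (N - k)!`. -/
theorem topk_cell_union_chambers {N k d : ℕ}
    (hN : 1 ≤ N) (hk1 : 1 ≤ k) (hkN : k ≤ N) (hd : 1 ≤ d)
    (z : Fin N → ((Fin d → ℝ) →ᵃ[ℝ] ℝ))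
    (I : Finset (Fin N)) (hI : I.card = k) :
    (cell z k I =
      ⋃ σ ∈ {σ : Equiv.Perm (Fin N) |
          (Finset.univ.filter (fun m : Fin N => (m : ℕ) < k)).image (fun m => σ m) = I},
        chamber z σ) ∧
    Nat.card {σ : Equiv.Perm (Fin N) //
        (Finset.univ.filter (fun m : Fin N => (m : ℕ) < k)).image (fun m => σ m) = I} =
      Nat.factorial k * Nat.factorial (N - k) := by
  constructor
  · ext x
    simp only [Set.mem_iUnion, Set.mem_setOf_eq, exists_prop]
    constructor
    · -- cell ⊆ union of chambers
      intro hx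
      have hkey := cell_key hk1 z I hI hx
      set eI := I.orderIsoOfFin hI with heI
      set eC := Iᶜ.orderIsoOfFin (card_compl_I I hI) with heC
      set τ₁ := Tuple.sort (fun a : Fin k => -(z (eI a) x)) with hτ₁
      set τ₂ := Tuple.sort (fun b : Fin (N - k) => -(z (eC b) x)) with hτ₂
      refine ⟨mkPerm I hI τ₁ τ₂, mkPerm_image I hI hkN τ₁ τ₂, ?_⟩
      intro a b hab
      simp only [mkPerm_apply, mkFun]
      by_cases ha : (a : ℕ) < k
      · by_cases hb : (b : ℕ) < k
        · rw [dif_pos ha, dif_pos hb]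
          have := Tuple.monotone_sort (fun a : Fin k => -(z (eI a) x))
            (a := ⟨a, ha⟩) (b := ⟨b, hb⟩) (Fin.mk_le_mk.mpr hab)
          simp only [Function.comp_apply] at this
          linarith
        · rw [dif_pos ha, dif_neg hb]
          apply hkey
          · exact (eI (τ₁ ⟨a, ha⟩)).2
          · exact Finset.mem_compl.mp (eC (τ₂ ⟨(b : ℕ) - k, _⟩)).2
      · by_cases hb : (b : ℕ) < k
        · exfalso
          have : (a : ℕ) ≤ (b : ℕ) := hab
          omega
        · rw [dif_neg ha, dif_neg hb]
          have hle : (⟨(a : ℕ) - k, by have := a.isLt; omega⟩ : Fin (N - k)) ≤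
              ⟨(b : ℕ) - k, by have := b.isLt; omega⟩ := by
            simp [Fin.le_def]
            have : (a : ℕ) ≤ (b : ℕ) := hab
            omega
          have := Tuple.monotone_sort (fun b : Fin (N - k) => -(z (eC b) x)) hle
          simp only [Function.comp_apply] at this
          linarith
    · -- union of chambers ⊆ cell
      rintro ⟨σ, hσ, hx⟩
      intro J hJ
      exact chamber_sum_le hk1 hkN z I hI σ hσ hx J hJ
  · -- counting
    have hF : Function.Bijective
        (fun p : Equiv.Perm (Fin k) × Equiv.Perm (Fin (N - k)) =>
          (⟨mkPerm I hI p.1 p.2, mkPerm_image I hI hkN p.1 p.2⟩ :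
            {σ : Equiv.Perm (Fin N) //
              (Finset.univ.filter (fun m : Fin N => (m : ℕ) < k)).image (fun m => σ m) = I})) := by
      constructor
      · rintro ⟨τ₁, τ₂⟩ ⟨τ₁', τ₂'⟩ h
        simp only [Subtype.mk.injEq] at h
        have hfun : mkFun I hI τ₁ τ₂ = mkFun I hI τ₁' τ₂' := by
          funext m
          have := congrArg (fun e : Equiv.Perm (Fin N) => e m) (congrArg Subtype.val h)
          simpa [mkPerm_apply] using this
        have h1 : τ₁ = τ₁' := by
          ext a
          have := congrFun hfun ⟨a, lt_of_lt_of_le a.isLt hkN⟩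
          rw [mkFun, mkFun, dif_pos a.isLt, dif_pos a.isLt] at this
          have := (I.orderIsoOfFin hI).injective (Subtype.coe_injective this)
          simpa using congrArg Fin.val this
        have h2 : τ₂ = τ₂' := by
          ext b
          have hbN : k + (b : ℕ) < N := by have := b.isLt; omega
          have hnlt : ¬ ((⟨k + (b : ℕ), hbN⟩ : Fin N) : ℕ) < k := by simp
          have := congrFun hfun ⟨k + (b : ℕ), hbN⟩
          rw [mkFun, mkFun, dif_neg hnlt, dif_neg hnlt] at this
          have h2 := (Iᶜ.orderIsoOfFin (card_compl_I I hI)).injective (Subtype.coe_injective this)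
          have e2 : b = (⟨((⟨k + (b:ℕ), hbN⟩ : Fin N) : ℕ) - k,
              by have hb := b.isLt; simp <;> omega⟩ : Fin (N - k)) := Fin.ext (by simp)
          rw [e2]
          exact congrArg Fin.val h2
        rw [Prod.mk.injEq]
        exact ⟨h1, h2⟩
      · rintro ⟨σ, hσ⟩
        -- membership facts
        have hmemI : ∀ m : Fin N, (m : ℕ) < k → σ m ∈ I := by
          intro m hm
          rw [← hσ]
          exact Finset.mem_image.mpr ⟨m, by simp [hm], rfl⟩
        have hmemC : ∀ m : Fin N, ¬ (m : ℕ) < k → σ m ∈ Iᶜ := by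
          intro m hm
          rw [Finset.mem_compl]
          intro hmem
          rw [← hσ] at hmem
          obtain ⟨m', hm', hmm⟩ := Finset.mem_image.mp hmem
          have := σ.injective hmm
          rw [this] at hm'
          simp at hm'
          exact hm hm'
        set eI := I.orderIsoOfFin hI with heI
        set eC := Iᶜ.orderIsoOfFin (card_compl_I I hI) with heC
        have hinj1 : Function.Injective (fun a : Fin k =>
            eI.symm ⟨σ (Fin.castLE hkN a), hmemI _ (by simp)⟩) := by
          intro a a' h
          have := eI.symm.injective h
          have h2 : σ (Fin.castLE hkN a) = σ (Fin.castLE hkN a') := congrArg Subtype.val this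
          have := σ.injective h2
          exact Fin.castLE_injective hkN this
        have hinj2 : Function.Injective (fun b : Fin (N - k) =>
            eC.symm ⟨σ ⟨k + (b : ℕ), by have := b.isLt; omega⟩,
              hmemC _ (by simp)⟩) := by
          intro b b' h
          have := eC.symm.injective h
          have h2 : σ ⟨k + (b : ℕ), by have := b.isLt; omega⟩ =
              σ ⟨k + (b' : ℕ), by have := b'.isLt; omega⟩ := congrArg Subtype.val this
          have := σ.injective h2
          have := congrArg Fin.val this
          simp at this
          exact Fin.ext this
        refine ⟨⟨Equiv.ofBijective _ (Finite.injective_iff_bijective.mp hinj1),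
          Equiv.ofBijective _ (Finite.injective_iff_bijective.mp hinj2)⟩, ?_⟩
        apply Subtype.ext
        apply Equiv.ext
        intro m
        simp only [mkPerm_apply, mkFun]
        split_ifs with h
        · simp only [Equiv.ofBijective_apply]
          rw [OrderIso.apply_symm_apply]
          rfl
        · simp only [Equiv.ofBijective_apply]
          rw [OrderIso.apply_symm_apply]
          exact congrArg σ (Fin.ext (by simp; omega))
    have := Nat.card_eq_of_bijective _ hF
    rw [← this]
    simp [Nat.card_eq_fintype_card, Fintype.card_perm]
end

section
/- Let d ≥ 1, let C ⊆ ℝ^d be a convex set, and let A be a finite family of n affine hyperplanes in ℝ^d. Then the number of regions of A in C (the number of connected components of C \ ⋃_{H∈A} H) is at most Φ(n, d) = ∑_{j=0}^{d} binomial(n, j). -/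
/-- Zaslavsky's function `Φ(n, d) = ∑_{j=0}^{d} C(n, j)`. -/
def Phi (n d : ℕ) : ℕ := ∑ j ∈ Finset.range (d + 1), Nat.choose n j

/-- The number of regions of an arrangement in a set `S`:
the number of connected components of `S` (with the subspace topology). -/
noncomputable def numComponents {X : Type*} [TopologicalSpace X] (S : Set X) : ℕ :=
  Nat.card (ConnectedComponents ↥S)

open Module

lemma one_le_Phi (n d : ℕ) : 1 ≤ Phi n d := by
  have h0 : (0 : ℕ) ∈ Finset.range (d + 1) := by simp
  calc 1 = Nat.choose n 0 := by simp
    _ ≤ Phi n d := Finset.single_le_sum (f := fun j => Nat.choose n j)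
        (fun _ _ => Nat.zero_le _) h0

lemma Phi_mono (n d : ℕ) : Phi n d ≤ Phi (n + 1) d :=
  Finset.sum_le_sum fun j _ => Nat.choose_le_choose j (Nat.le_succ n)

lemma Phi_pascal (n D : ℕ) : Phi (n + 1) (D + 1) = Phi n (D + 1) + Phi n D := by
  rw [Phi, Phi, Phi, Finset.sum_range_succ' (fun j => Nat.choose (n + 1) j),
    Finset.sum_range_succ' (fun j => Nat.choose n j)]
  simp only [Nat.choose_succ_succ, Nat.succ_eq_add_one, Nat.choose_zero_right,
    Finset.sum_add_distrib]
  omega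

/-- `σ` is a realizable (strict) sign vector for the arrangement given by `g, c`. -/
def Realizes {V : Type*} [AddCommGroup V] [Module ℝ V] {n : ℕ}
    (g : Fin n → V →ₗ[ℝ] ℝ) (c : Fin n → ℝ) (σ : Fin n → Bool) : Prop :=
  ∃ x : V, ∀ i, if σ i then c i < g i x else g i x < c i

lemma snoc_init_eq {n : ℕ} (σ : Fin (n + 1) → Bool) {b : Bool} (h : σ (Fin.last n) = b) :
    Fin.snoc (Fin.init σ) b = σ := by
  rw [← h]; exact Fin.snoc_init_self σ

lemma ext_init_last {n : ℕ} {σ₁ σ₂ : Fin (n + 1) → Bool}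
    (h1 : Fin.init σ₁ = Fin.init σ₂) (h2 : σ₁ (Fin.last n) = σ₂ (Fin.last n)) : σ₁ = σ₂ := by
  rw [← Fin.snoc_init_self σ₁, ← Fin.snoc_init_self σ₂, h1, h2]

lemma comb_lt {u v c t : ℝ} (hu : u < c) (hv : v < c) (ht0 : 0 < t) (ht1 : t < 1) :
    u + t * (v - u) < c := by
  nlinarith [mul_pos ht0 (sub_pos.2 hv), mul_pos (sub_pos.2 ht1) (sub_pos.2 hu)]

lemma comb_gt {u v c t : ℝ} (hu : c < u) (hv : c < v) (ht0 : 0 < t) (ht1 : t < 1) :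
    c < u + t * (v - u) := by
  nlinarith [mul_pos ht0 (sub_pos.2 hv), mul_pos (sub_pos.2 ht1) (sub_pos.2 hu)]

/-- Key combinatorial lemma: the number of realizable strict sign vectors of `n`
affine hyperplanes in a real vector space `V` is at most `Φ(n, dim V)`. -/
lemma card_realizes_le_Phi :
    ∀ (n : ℕ) (V : Type) [AddCommGroup V] [Module ℝ V] [FiniteDimensional ℝ V]
      (g : Fin n → V →ₗ[ℝ] ℝ) (c : Fin n → ℝ),
      Nat.card {σ : Fin n → Bool // Realizes g c σ} ≤ Phi n (finrank ℝ V) := by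
  intro n
  induction n with
  | zero =>
    intro V _ _ _ g c
    have h1 : Nat.card {σ : Fin 0 → Bool // Realizes g c σ} ≤ Nat.card (Fin 0 → Bool) :=
      Nat.card_le_card_of_injective _ Subtype.val_injective
    have h2 : Nat.card (Fin 0 → Bool) = 1 := by
      simp [Nat.card_eq_fintype_card]
    exact (h1.trans_eq h2).trans (one_le_Phi 0 _)
  | succ n ih =>
    intro V _ _ _ g c
    classical
    set φ := g (Fin.last n) with hφdef
    set g' : Fin n → V →ₗ[ℝ] ℝ := fun i => g i.castSucc with hg'
    set c' : Fin n → ℝ := fun i => c i.castSucc with hc'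
    have hdel : ∀ σ : Fin (n + 1) → Bool, Realizes g c σ → Realizes g' c' (Fin.init σ) := by
      rintro σ ⟨x, hx⟩
      exact ⟨x, fun i => hx i.castSucc⟩
    by_cases hφ : φ = 0
    · -- degenerate last "hyperplane"
      by_cases hc0 : c (Fin.last n) = 0
      · have : IsEmpty {σ : Fin (n + 1) → Bool // Realizes g c σ} := by
          constructor
          rintro ⟨σ, x, hx⟩
          have h := hx (Fin.last n)
          rw [← hφdef] at h
          rw [hφ, hc0] at h
          simp only [LinearMap.zero_apply] at h
          cases hσ : σ (Fin.last n) <;> rw [hσ] at h <;> simp at h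
        rw [Nat.card_of_isEmpty]
        exact Nat.zero_le _
      · have hlastdet : ∀ σ : Fin (n + 1) → Bool, Realizes g c σ →
            σ (Fin.last n) = decide (c (Fin.last n) < 0) := by
          rintro σ ⟨x, hx⟩
          have h := hx (Fin.last n)
          rw [← hφdef] at h
          rw [hφ] at h
          simp only [LinearMap.zero_apply] at h
          cases hσ : σ (Fin.last n) <;> rw [hσ] at h
          · rw [if_neg (by simp)] at h
            exact (decide_eq_false (lt_asymm h)).symm
          · rw [if_pos rfl] at h
            exact (decide_eq_true h).symm
        have hinj : Function.Injective (fun σ : {σ : Fin (n+1) → Bool // Realizes g c σ} =>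
            (⟨Fin.init σ.1, hdel _ σ.2⟩ : {τ : Fin n → Bool // Realizes g' c' τ})) := by
          rintro ⟨σ₁, h₁⟩ ⟨σ₂, h₂⟩ h
          have hih : Fin.init σ₁ = Fin.init σ₂ := congrArg Subtype.val h
          exact Subtype.ext (ext_init_last hih ((hlastdet σ₁ h₁).trans (hlastdet σ₂ h₂).symm))
        calc Nat.card {σ : Fin (n+1) → Bool // Realizes g c σ}
            ≤ Nat.card {τ : Fin n → Bool // Realizes g' c' τ} :=
              Nat.card_le_card_of_injective _ hinj
          _ ≤ Phi n (finrank ℝ V) := ih V g' c'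
          _ ≤ Phi (n + 1) (finrank ℝ V) := Phi_mono n _
    · -- main case : last hyperplane is genuine
      obtain ⟨v, hv⟩ : ∃ v, φ v ≠ 0 := by
        by_contra h
        push_neg at h
        exact hφ (LinearMap.ext h)
      set x₀ : V := (c (Fin.last n) / φ v) • v with hx₀
      have hx₀φ : φ x₀ = c (Fin.last n) := by
        rw [hx₀, map_smul, smul_eq_mul, div_mul_cancel₀ _ hv]
      set W := LinearMap.ker φ with hW
      set h : Fin n → W →ₗ[ℝ] ℝ := fun i => (g i.castSucc).comp W.subtype with hh
      set c'' : Fin n → ℝ := fun i => c i.castSucc - g i.castSucc x₀ with hc''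
      set B : Set (Fin n → Bool) :=
        {τ | Realizes g c (Fin.snoc τ true) ∧ Realizes g c (Fin.snoc τ false)} with hB
      -- B consists of sign vectors realizable inside the hyperplane
      have hBsub : ∀ τ ∈ B, Realizes h c'' τ := by
        rintro τ ⟨⟨xp, hxp⟩, ⟨xm, hxm⟩⟩
        have hp : c (Fin.last n) < φ xp := by
          have h0 := hxp (Fin.last n)
          rwa [Fin.snoc_last, if_pos rfl] at h0
        have hm : φ xm < c (Fin.last n) := by
          have h0 := hxm (Fin.last n)
          rwa [Fin.snoc_last, if_neg (by simp)] at h0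
        set a : ℝ := φ xp - c (Fin.last n) with ha
        set b : ℝ := c (Fin.last n) - φ xm with hb
        have ha0 : 0 < a := by rw [ha]; linarith
        have hb0 : 0 < b := by rw [hb]; linarith
        set t : ℝ := b / (a + b) with ht
        have ht0 : 0 < t := div_pos hb0 (by linarith)
        have ht1 : t < 1 := (div_lt_one (by linarith)).2 (by linarith)
        set xs : V := xm + t • (xp - xm) with hxs
        have hφxs : φ xs = c (Fin.last n) := by
          have hab : φ xp - φ xm = a + b := by rw [ha, hb]; ring
          rw [hxs, map_add, map_smul, map_sub, smul_eq_mul, hab, ht,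
            div_mul_cancel₀ _ (by positivity : a + b ≠ 0), hb]
          ring
        have hwmem : xs - x₀ ∈ W := by
          rw [hW, LinearMap.mem_ker, map_sub, hφxs, hx₀φ, sub_self]
        refine ⟨⟨xs - x₀, hwmem⟩, fun i => ?_⟩
        have hgi : h i ⟨xs - x₀, hwmem⟩ = g i.castSucc xs - g i.castSucc x₀ := by
          simp [hh, map_sub]
        have hcomb : g i.castSucc xs
            = g i.castSucc xm + t * (g i.castSucc xp - g i.castSucc xm) := by
          rw [hxs, map_add, map_smul, map_sub, smul_eq_mul]
        have hpi := hxp i.castSucc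
        have hmi := hxm i.castSucc
        rw [Fin.snoc_castSucc] at hpi hmi
        have hc2 : c'' i = c i.castSucc - g i.castSucc x₀ := rfl
        cases hτ : τ i <;> rw [hτ] at hpi hmi
        · rw [if_neg (by simp)] at hpi hmi
          rw [if_neg (by simp), hgi, hc2, sub_lt_sub_iff_right, hcomb]
          exact comb_lt hmi hpi ht0 ht1
        · rw [if_pos rfl] at hpi hmi
          rw [if_pos rfl, hgi, hc2, sub_lt_sub_iff_right, hcomb]
          exact comb_gt hmi hpi ht0 ht1
      -- the injection realizing the deletion-restriction count
      set e : {σ : Fin (n+1) → Bool // Realizes g c σ} →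
          ({τ : Fin n → Bool // Realizes g' c' τ} ⊕ {τ : Fin n → Bool // τ ∈ B}) := fun σ =>
        if hb : σ.1 (Fin.last n) = true ∧ Fin.init σ.1 ∈ B then Sum.inr ⟨Fin.init σ.1, hb.2⟩
        else Sum.inl ⟨Fin.init σ.1, hdel _ σ.2⟩ with he
      have hmemB : ∀ (σ₁ σ₂ : Fin (n+1) → Bool), Realizes g c σ₁ → Realizes g c σ₂ →
          Fin.init σ₁ = Fin.init σ₂ → σ₁ (Fin.last n) = true → σ₂ (Fin.last n) = false →
          Fin.init σ₁ ∈ B := by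
        intro σ₁ σ₂ hr1 hr2 hinit h1 h2
        constructor
        · rw [snoc_init_eq σ₁ h1]; exact hr1
        · rw [hinit, snoc_init_eq σ₂ h2]; exact hr2
      have hFF : ∀ σ₁ σ₂ : Fin (n + 1) → Bool, Realizes g c σ₁ → Realizes g c σ₂ →
          Fin.init σ₁ = Fin.init σ₂ → ¬(σ₁ (Fin.last n) = true ∧ Fin.init σ₁ ∈ B) →
          ¬(σ₂ (Fin.last n) = true ∧ Fin.init σ₂ ∈ B) →
          σ₁ (Fin.last n) = σ₂ (Fin.last n) := by
        intro σ₁ σ₂ h₁ h₂ hih hb1 hb2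
        cases hσ1 : σ₁ (Fin.last n) <;> cases hσ2 : σ₂ (Fin.last n)
        · rfl
        · exact absurd ⟨hσ2, hmemB σ₂ σ₁ h₂ h₁ hih.symm hσ2 hσ1⟩ hb2
        · exact absurd ⟨hσ1, hmemB σ₁ σ₂ h₁ h₂ hih hσ1 hσ2⟩ hb1
        · rfl
      have einj : Function.Injective e := by
        rintro ⟨σ₁, h₁⟩ ⟨σ₂, h₂⟩ heq
        rw [he] at heq
        simp only at heq
        split_ifs at heq
        all_goals first
          | exact Sum.noConfusion heq
          | (have hb1 : σ₁ (Fin.last n) = true ∧ Fin.init σ₁ ∈ B := ‹_›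
             have hb2 : σ₂ (Fin.last n) = true ∧ Fin.init σ₂ ∈ B := ‹_›
             have hih : Fin.init σ₁ = Fin.init σ₂ := congrArg Subtype.val (Sum.inr.inj heq)
             exact Subtype.ext (ext_init_last hih (hb1.1.trans hb2.1.symm)))
          | (have hb1 : ¬(σ₁ (Fin.last n) = true ∧ Fin.init σ₁ ∈ B) := ‹_›
             have hb2 : ¬(σ₂ (Fin.last n) = true ∧ Fin.init σ₂ ∈ B) := ‹_›
             have hih : Fin.init σ₁ = Fin.init σ₂ := congrArg Subtype.val (Sum.inl.inj heq)
             exact Subtype.ext (ext_init_last hih (hFF σ₁ σ₂ h₁ h₂ hih hb1 hb2)))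
      have hcard : Nat.card {σ : Fin (n+1) → Bool // Realizes g c σ}
          ≤ Nat.card {τ : Fin n → Bool // Realizes g' c' τ}
            + Nat.card {τ : Fin n → Bool // τ ∈ B} := by
        have h1 := Nat.card_le_card_of_injective e einj
        rwa [Nat.card_sum] at h1
      -- dimension count
      have hrange : LinearMap.range φ = ⊤ := by
        apply LinearMap.range_eq_top.2
        intro r
        exact ⟨(r / φ v) • v, by rw [map_smul, smul_eq_mul, div_mul_cancel₀ _ hv]⟩
      have h5 := LinearMap.finrank_range_add_finrank_ker φ
      have h6 : finrank ℝ ↥(LinearMap.range φ) = 1 := by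
        rw [hrange]
        rw [finrank_top, finrank_self]
      have hdim : finrank ℝ W + 1 = finrank ℝ V := by
        rw [hW]
        omega
      obtain ⟨D, hDeq⟩ : ∃ D, finrank ℝ V = D + 1 := ⟨finrank ℝ W, hdim.symm⟩
      have hWD : finrank ℝ W = D := by omega
      have hBle : Nat.card {τ : Fin n → Bool // τ ∈ B} ≤ Phi n D := by
        have hinj2 : Function.Injective (fun τ : {τ : Fin n → Bool // τ ∈ B} =>
            (⟨τ.1, hBsub _ τ.2⟩ : {τ : Fin n → Bool // Realizes h c'' τ})) := by
          rintro ⟨τ₁, _⟩ ⟨τ₂, _⟩ hh'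
          simpa using hh'
        calc Nat.card {τ : Fin n → Bool // τ ∈ B}
            ≤ Nat.card {τ : Fin n → Bool // Realizes h c'' τ} :=
              Nat.card_le_card_of_injective _ hinj2
          _ ≤ Phi n (finrank ℝ W) := ih W h c''
          _ = Phi n D := by rw [hWD]
      calc Nat.card {σ : Fin (n+1) → Bool // Realizes g c σ}
          ≤ Nat.card {τ : Fin n → Bool // Realizes g' c' τ}
            + Nat.card {τ : Fin n → Bool // τ ∈ B} := hcard
        _ ≤ Phi n (D + 1) + Phi n D := by
            have := ih V g' c'
            rw [hDeq] at this
            exact Nat.add_le_add this hBle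
        _ = Phi (n + 1) (D + 1) := (Phi_pascal n D).symm
        _ = Phi (n + 1) (finrank ℝ V) := by rw [hDeq]

/-- for a convex set `C ⊆ ℝ^d` and a family of `n` affine hyperplanes
`H_i = {x : f_i(x) = c_i}` (with `f_i ≠ 0`), the number of connected components of
`C \ ⋃_i H_i` is at most `Φ(n, d) = ∑_{j=0}^{d} C(n, j)`. -/
theorem regions_in_convex_le_Phi {d n : ℕ} (hd : 1 ≤ d)
    (C : Set (Fin d → ℝ)) (hC : Convex ℝ C)
    (f : Fin n → ((Fin d → ℝ) →ₗ[ℝ] ℝ)) (c : Fin n → ℝ)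
    (hf : ∀ i, f i ≠ 0) :
    numComponents (C \ ⋃ i : Fin n, {x : Fin d → ℝ | f i x = c i}) ≤ Phi n d := by
  classical
  set T : Set (Fin d → ℝ) := C \ ⋃ i : Fin n, {x : Fin d → ℝ | f i x = c i} with hT
  have hTne : ∀ (x : ↥T) (i : Fin n), f i x.1 ≠ c i := by
    rintro ⟨x, hxC, hxU⟩ i hcon
    exact hxU (Set.mem_iUnion.2 ⟨i, hcon⟩)
  set F : ↥T → (Fin n → Bool) := fun x i => decide (c i < f i x.1) with hF
  have hFcont : Continuous F := by
    apply IsLocallyConstant.continuous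
    rw [IsLocallyConstant.iff_exists_open]
    intro x
    refine ⟨⋂ i, {y : ↥T | 0 < (f i y.1 - c i) * (f i x.1 - c i)}, ?_, ?_, ?_⟩
    · apply isOpen_iInter_of_finite
      intro i
      exact isOpen_lt continuous_const
        ((((f i).continuous_of_finiteDimensional.comp continuous_subtype_val).sub
          continuous_const).mul continuous_const)
    · refine Set.mem_iInter.2 fun i => ?_
      exact mul_self_pos.2 (sub_ne_zero.2 (hTne x i))
    · intro y hy
      funext i
      have hyi : 0 < (f i y.1 - c i) * (f i x.1 - c i) := Set.mem_iInter.1 hy i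
      rcases mul_pos_iff.1 hyi with ⟨h1, h2⟩ | ⟨h1, h2⟩
      · simp [hF, sub_pos.1 h1, sub_pos.1 h2]
      · simp [hF, not_lt.2 (sub_neg.1 h1).le, not_lt.2 (sub_neg.1 h2).le]
  have hsame : ∀ x y : ↥T, F x = F y →
      (ConnectedComponents.mk x = ConnectedComponents.mk y) := by
    intro x y hxy
    have hiff : ∀ i, (c i < f i x.1 ↔ c i < f i y.1) := by
      intro i
      have := congrFun hxy i
      simp only [hF, decide_eq_decide] at this
      exact this
    have hseg : segment ℝ x.1 y.1 ⊆ T := by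
      rintro z ⟨a, b, ha, hb, hab, rfl⟩
      constructor
      · exact hC x.2.1 y.2.1 ha hb hab
      · simp only [Set.mem_iUnion, Set.mem_setOf_eq, not_exists]
        intro i hcon
        have hz : f i (a • x.1 + b • y.1) = a * f i x.1 + b * f i y.1 := by
          rw [map_add, map_smul, map_smul, smul_eq_mul, smul_eq_mul]
        by_cases hlt : c i < f i x.1
        · have h2 : c i < f i y.1 := (hiff i).1 hlt
          have : a • f i x.1 + b • f i y.1 ∈ Set.Ioi (c i) :=
            (convex_Ioi (c i)) hlt h2 ha hb hab
          rw [smul_eq_mul, smul_eq_mul] at this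
          rw [hcon] at hz
          exact absurd hz.symm (ne_of_gt this)
        · have h1 : f i x.1 < c i := lt_of_le_of_ne (not_lt.1 hlt) (hTne x i)
          have h2 : f i y.1 < c i :=
            lt_of_le_of_ne (not_lt.1 (fun hcc => hlt ((hiff i).2 hcc))) (hTne y i)
          have : a • f i x.1 + b • f i y.1 ∈ Set.Iio (c i) :=
            (convex_Iio (c i)) h1 h2 ha hb hab
          rw [smul_eq_mul, smul_eq_mul] at this
          rw [hcon] at hz
          exact absurd hz.symm (ne_of_lt this)
    set m : ↥(segment ℝ x.1 y.1) → ↥T := fun z => ⟨z.1, hseg z.2⟩ with hm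
    have hmc : Continuous m := Continuous.subtype_mk continuous_subtype_val _
    have hpre : PreconnectedSpace ↥(segment ℝ x.1 y.1) :=
      Subtype.preconnectedSpace (convex_segment x.1 y.1).isPreconnected
    have hr : IsPreconnected (Set.range m) := isPreconnected_range hmc
    have hxm : x ∈ Set.range m := ⟨⟨x.1, left_mem_segment ℝ x.1 y.1⟩, Subtype.ext rfl⟩
    have hym : y ∈ Set.range m := ⟨⟨y.1, right_mem_segment ℝ x.1 y.1⟩, Subtype.ext rfl⟩
    rw [ConnectedComponents.coe_eq_coe]
    exact connectedComponent_eq ((hr.subset_connectedComponent hxm) hym)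
  set G := hFcont.connectedComponentsLift with hG
  have hGmem : ∀ u, Realizes f c (G u) := by
    intro u
    obtain ⟨x, rfl⟩ := ConnectedComponents.surjective_coe u
    rw [hG, hFcont.connectedComponentsLift_apply_coe]
    refine ⟨x.1, fun i => ?_⟩
    by_cases hlt : c i < f i x.1
    · simp [hF, hlt]
    · have : f i x.1 < c i := lt_of_le_of_ne (not_lt.1 hlt) (hTne x i)
      simp [hF, hlt, this]
  have hinj : Function.Injective (fun u : ConnectedComponents ↥T =>
      (⟨G u, hGmem u⟩ : {σ : Fin n → Bool // Realizes f c σ})) := by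
    intro u v huv
    obtain ⟨x, rfl⟩ := ConnectedComponents.surjective_coe u
    obtain ⟨y, rfl⟩ := ConnectedComponents.surjective_coe v
    have hval : G (ConnectedComponents.mk x) = G (ConnectedComponents.mk y) :=
      congrArg Subtype.val huv
    rw [hG, hFcont.connectedComponentsLift_apply_coe,
      hFcont.connectedComponentsLift_apply_coe] at hval
    exact hsame x y hval
  calc numComponents T ≤ Nat.card {σ : Fin n → Bool // Realizes f c σ} :=
        Nat.card_le_card_of_injective _ hinj
    _ ≤ Phi n (finrank ℝ (Fin d → ℝ)) := card_realizes_le_Phi n (Fin d → ℝ) f c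
    _ = Phi n d := by rw [Module.finrank_fin_fun]
end

section
/- For every d ≥ 1 and every n ≥ 0, there exists a family of n affine hyperplanes in ℝ^d whose complement has exactly Φ(n, d) = ∑_{j=0}^{d} binomial(n, j) connected components. Consequently, the maximal number of linear regions of a width-n dense ReLU layer on ℝ^d is at least Φ(n, d), so the upper bound Φ(n, d) is attained. -/
namespace PhiArr
open Finset Polynomial Set

open Finset

def cnt (T : Finset ℕ) (k : ℕ) : ℕ := (T.filter (· < k)).card

def par (T : Finset ℕ) (k : ℕ) : Bool := decide (Odd (cnt T k))

def sig (n : ℕ) (σ : Fin n → Bool) : ℕ → Bool :=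
  fun k => if h : 0 < k ∧ k ≤ n then σ ⟨k - 1, by omega⟩ else false

def chg (n : ℕ) (σ : Fin n → Bool) : Finset ℕ :=
  (range n).filter (fun k => sig n σ (k + 1) ≠ sig n σ k)

lemma cnt_zero (T : Finset ℕ) : cnt T 0 = 0 := by simp [cnt]

lemma cnt_succ (T : Finset ℕ) (k : ℕ) :
    cnt T (k + 1) = cnt T k + if k ∈ T then 1 else 0 := by
  unfold cnt
  have h1 : T.filter (· < k + 1) = T.filter (fun j => j < k ∨ j = k) := by
    apply Finset.filter_congr; intro j _; simp [Nat.lt_succ_iff_lt_or_eq]; exact Nat.le_iff_lt_or_eq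
  rw [h1, Finset.filter_or, Finset.card_union_of_disjoint, Finset.filter_eq']
  · split_ifs <;> simp
  · simp [Finset.disjoint_filter]; omega

lemma par_zero (T : Finset ℕ) : par T 0 = false := by simp [par, cnt_zero]

lemma par_succ (T : Finset ℕ) (k : ℕ) :
    par T (k + 1) = xor (par T k) (decide (k ∈ T)) := by
  by_cases hk : k ∈ T <;>
    simp [par, cnt_succ, hk, Nat.odd_add_one, Bool.xor_true, Bool.xor_false, decide_not,
      Nat.not_odd_iff_even, Nat.not_even_iff_odd, ← Nat.not_odd_iff_even]

lemma par_chg {n : ℕ} (σ : Fin n → Bool) : ∀ k, k ≤ n → par (chg n σ) k = sig n σ k := by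
  intro k
  induction k with
  | zero => intro _; simp [par_zero, sig]
  | succ k ih =>
    intro hk
    have hkn : k < n := hk
    rw [par_succ, ih (le_of_lt hkn)]
    have hmem : (k ∈ chg n σ) ↔ (sig n σ (k + 1) ≠ sig n σ k) := by
      simp [chg, hkn]
    by_cases h : sig n σ (k + 1) = sig n σ k
    · have : k ∉ chg n σ := by simp [hmem, h]
      simp [this, h]
    · have : k ∈ chg n σ := hmem.mpr h
      simp only [this, decide_true, Bool.xor_true]
      cases hs : sig n σ k <;> cases hs' : sig n σ (k + 1) <;> simp_all
  
lemma sig_fin {n : ℕ} (σ : Fin n → Bool) (i : Fin n) : sig n σ ((i : ℕ) + 1) = σ i := by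
  have : 0 < (i : ℕ) + 1 ∧ (i : ℕ) + 1 ≤ n := ⟨Nat.succ_pos _, i.isLt⟩
  simp [sig, this]

lemma par_inj {n : ℕ} {T T' : Finset ℕ} (hT : T ⊆ range n) (hT' : T' ⊆ range n)
    (h : ∀ i : Fin n, par T ((i : ℕ) + 1) = par T' ((i : ℕ) + 1)) : T = T' := by
  have hpar : ∀ k, par T k = par T' k := by
    intro k
    induction k with
    | zero => simp [par_zero]
    | succ k ih =>
      by_cases hk : k < n
      · exact h ⟨k, hk⟩
      · have h1 : k ∉ T := fun hmem => hk (mem_range.mp (hT hmem))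
        have h2 : k ∉ T' := fun hmem => hk (mem_range.mp (hT' hmem))
        simp [par_succ, h1, h2, ih]
  ext k
  have h1 := par_succ T k
  have h2 := par_succ T' k
  rw [hpar k, hpar (k+1)] at h1
  rw [h1] at h2
  cases hmk : decide (k ∈ T) <;> cases hmk' : decide (k ∈ T') <;> simp_all [Bool.xor_true]

lemma chg_subset {n : ℕ} (σ : Fin n → Bool) : chg n σ ⊆ range n := Finset.filter_subset _ _

lemma chg_par {n : ℕ} {T : Finset ℕ} (hT : T ⊆ range n) :
    chg n (fun i => par T ((i : ℕ) + 1)) = T := by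
  apply par_inj (chg_subset _) hT
  intro i
  rw [par_chg _ _ i.isLt, sig_fin]

/-- The counting lemma. -/
lemma card_subtype (n d : ℕ) :
    Nat.card {T : Finset ℕ // T ⊆ range n ∧ T.card ≤ d} = Phi n d := by
  classical
  set A : Finset (Finset ℕ) := ((range n).powerset).filter (fun T => T.card ≤ d) with hA
  have he : {T : Finset ℕ // T ⊆ range n ∧ T.card ≤ d} ≃ {T // T ∈ A} :=
    Equiv.subtypeEquivRight (by intro T; simp [hA, Finset.mem_filter, Finset.mem_powerset])
  rw [Nat.card_congr he, Nat.card_eq_fintype_card, Fintype.card_coe]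
  have hbU : A = (range (d + 1)).biUnion (fun j => Finset.powersetCard j (range n)) := by
    ext T
    simp only [hA, Finset.mem_filter, Finset.mem_powerset, Finset.mem_biUnion,
      Finset.mem_range, Finset.mem_powersetCard, Nat.lt_succ_iff]
    constructor
    · rintro ⟨h1, h2⟩; exact ⟨T.card, h2, h1, rfl⟩
    · rintro ⟨j, hj, h1, rfl⟩; exact ⟨h1, hj⟩
  rw [hbU, Finset.card_biUnion]
  · simp [Phi, Finset.card_powersetCard]
  · intro i _ j _ hij
    show Disjoint (Finset.powersetCard i (range n)) (Finset.powersetCard j (range n))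
    rw [Finset.disjoint_left]
    intro T hT hT'
    rw [Finset.mem_powersetCard] at hT hT'
    exact hij (hT.2.symm.trans hT'.2)


open Finset Polynomial Set

noncomputable def fmap (d n : ℕ) (i : Fin n) : (Fin d → ℝ) →ₗ[ℝ] ℝ :=
  ∑ j : Fin d, (((i : ℕ) : ℝ) + 1) ^ ((j : ℕ) + 1) • (LinearMap.proj j : (Fin d → ℝ) →ₗ[ℝ] ℝ)

def F (d : ℕ) (x : Fin d → ℝ) (s : ℝ) : ℝ := (∑ j : Fin d, x j * s ^ ((j : ℕ) + 1)) - 1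

lemma fmap_apply (d n : ℕ) (i : Fin n) (x : Fin d → ℝ) :
    fmap d n i x = ∑ j : Fin d, (((i : ℕ) : ℝ) + 1) ^ ((j : ℕ) + 1) * x j := by
  simp [fmap]

lemma F_cast (d n : ℕ) (i : Fin n) (x : Fin d → ℝ) :
    F d x (((i : ℕ) + 1 : ℕ) : ℝ) = fmap d n i x - 1 := by
  rw [F, fmap_apply]
  push_cast
  congr 1
  exact Finset.sum_congr rfl fun j _ => by ring

lemma F_zero (d : ℕ) (x : Fin d → ℝ) : F d x 0 = -1 := by
  simp [F]

lemma F_continuous (d : ℕ) (x : Fin d → ℝ) : Continuous (F d x) := by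
  unfold F
  exact (continuous_finset_sum _ fun j _ => continuous_const.mul (continuous_pow _)).sub continuous_const

def Rg (d n : ℕ) (σ : Fin n → Bool) : Set (Fin d → ℝ) :=
  ⋂ i : Fin n, (if σ i then {x | 1 < fmap d n i x} else {x | fmap d n i x < 1})

def Sset (d n : ℕ) : Set (Fin d → ℝ) := {x | ∀ i : Fin n, fmap d n i x ≠ 1}

lemma mem_Rg {d n : ℕ} {σ : Fin n → Bool} {x : Fin d → ℝ} :
    x ∈ Rg d n σ ↔ ∀ i : Fin n, (if σ i then 1 < fmap d n i x else fmap d n i x < 1) := by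
  simp only [Rg, Set.mem_iInter]
  refine forall_congr' fun i => ?_
  split_ifs <;> simp

lemma Rg_open (d n : ℕ) (σ : Fin n → Bool) : IsOpen (Rg d n σ) := by
  apply isOpen_iInter_of_finite
  intro i
  have hc : Continuous (fmap d n i) := (fmap d n i).continuous_of_finiteDimensional
  split_ifs
  · exact isOpen_Ioi.preimage hc
  · exact isOpen_Iio.preimage hc

lemma Rg_preconnected (d n : ℕ) (σ : Fin n → Bool) : IsPreconnected (Rg d n σ) := by
  refine Convex.isPreconnected ?_
  apply convex_iInter
  intro i
  split_ifs
  · exact convex_halfSpace_gt (fmap d n i).isLinear 1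
  · exact convex_halfSpace_lt (fmap d n i).isLinear 1

lemma Rg_subset_Sset (d n : ℕ) (σ : Fin n → Bool) : Rg d n σ ⊆ Sset d n := by
  intro x hx i
  rw [mem_Rg] at hx
  have := hx i
  split_ifs at this
  · exact ne_of_gt this
  · exact ne_of_lt this

noncomputable def sgn (d n : ℕ) (x : Fin d → ℝ) : Fin n → Bool := fun i => decide (1 < fmap d n i x)

lemma mem_Rg_sgn {d n : ℕ} {x : Fin d → ℝ} (hx : x ∈ Sset d n) : x ∈ Rg d n (sgn d n x) := by
  rw [mem_Rg]
  intro i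
  by_cases h : 1 < fmap d n i x
  · simp [sgn, h]
  · have : fmap d n i x < 1 := lt_of_le_of_ne (le_of_not_gt h) (hx i)
    simp [sgn, h, this]

lemma sgn_eq_of_mem {d n : ℕ} {σ : Fin n → Bool} {x : Fin d → ℝ} (hx : x ∈ Rg d n σ) :
    sgn d n x = σ := by
  funext i
  rw [mem_Rg] at hx
  have := hx i
  cases hσ : σ i <;> rw [hσ] at this <;> simp only [Bool.false_eq_true, if_false,
    if_true] at this <;> simp only [sgn]
  · simp [lt_asymm this]
  · simp [this]

lemma sign_of_mem {d n : ℕ} {σ : Fin n → Bool} {x : Fin d → ℝ} (hx : x ∈ Rg d n σ) :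
    ∀ k : ℕ, k ≤ n → (if sig n σ k then 0 < F d x (k : ℝ) else F d x (k : ℝ) < 0) := by
  intro k hk
  match k with
  | 0 =>
    have : sig n σ 0 = false := by simp [sig]
    rw [this]
    simp [F_zero]
  | Nat.succ k =>
    have hkn : k < n := hk
    have hσ : sig n σ (k + 1) = σ ⟨k, hkn⟩ := by
      have : 0 < k + 1 ∧ k + 1 ≤ n := ⟨Nat.succ_pos _, hk⟩
      simp [sig, this]
    have hF : F d x (((k + 1 : ℕ)) : ℝ) = fmap d n ⟨k, hkn⟩ x - 1 := F_cast d n ⟨k, hkn⟩ x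
    rw [mem_Rg] at hx
    have hr := hx ⟨k, hkn⟩
    rw [hσ, hF]
    split_ifs at hr ⊢ with h
    · linarith
    · linarith


open Finset Polynomial Set

lemma card_chg_le {d n : ℕ} {σ : Fin n → Bool}
    (hne : (Rg d n σ).Nonempty) : (chg n σ).card ≤ d := by
  classical
  obtain ⟨x, hx⟩ := hne
  by_contra hcard
  push_neg at hcard
  set P : Polynomial ℝ := (∑ j : Fin d, Polynomial.C (x j) * Polynomial.X ^ ((j : ℕ) + 1))
      - Polynomial.C 1 with hP
  have hPeval : ∀ s : ℝ, P.eval s = F d x s := by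
    intro s
    simp [hP, F, Polynomial.eval_finset_sum]
  have hPdeg : P.natDegree ≤ d := by
    refine le_trans (Polynomial.natDegree_sub_le _ _) (max_le ?_ ?_)
    · apply Polynomial.natDegree_sum_le_of_forall_le
      intro j _
      refine le_trans (Polynomial.natDegree_mul_le) ?_
      simp [Polynomial.natDegree_X_pow]
    · simp
  have hroot : ∀ k : ℕ, ∃ r : ℝ,
      k ∈ chg n σ → r ∈ Set.Ioo (k : ℝ) ((k : ℝ) + 1) ∧ P.eval r = 0 := by
    intro k
    by_cases hk : k ∈ chg n σ
    · have hkn : k < n := by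
        have := (Finset.mem_filter.mp hk).1
        exact Finset.mem_range.mp this
      have hflip : sig n σ (k + 1) ≠ sig n σ k := (Finset.mem_filter.mp hk).2
      have h1 := sign_of_mem hx k (le_of_lt hkn)
      have h2 := sign_of_mem hx (k + 1) hkn
      have hcast : (((k + 1 : ℕ)) : ℝ) = (k : ℝ) + 1 := by push_cast; ring
      rw [hcast] at h2
      have hcont : ContinuousOn (F d x) (Set.Icc (k : ℝ) ((k : ℝ) + 1)) :=
        (F_continuous d x).continuousOn
      have hle : (k : ℝ) ≤ (k : ℝ) + 1 := by linarith
      cases hs1 : sig n σ k <;> cases hs2 : sig n σ (k + 1) <;>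
        rw [hs1] at h1 <;> rw [hs2] at h2 <;> simp only [if_true, Bool.false_eq_true,
          if_false] at h1 h2
      · exact absurd (hs2.trans hs1.symm) hflip
      · have : (0 : ℝ) ∈ Set.Ioo (F d x (k : ℝ)) (F d x ((k : ℝ) + 1)) := ⟨h1, h2⟩
        obtain ⟨r, hr, hre⟩ := intermediate_value_Ioo hle hcont this
        exact ⟨r, fun _ => ⟨hr, by rw [hPeval]; exact hre⟩⟩
      · have : (0 : ℝ) ∈ Set.Ioo (F d x ((k : ℝ) + 1)) (F d x (k : ℝ)) := ⟨h2, h1⟩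
        obtain ⟨r, hr, hre⟩ := intermediate_value_Ioo' hle hcont this
        exact ⟨r, fun _ => ⟨hr, by rw [hPeval]; exact hre⟩⟩
      · exact absurd (hs2.trans hs1.symm) hflip
    · exact ⟨0, fun h => absurd h hk⟩
  choose r hr using hroot
  have hmono : ∀ a ∈ chg n σ, ∀ b ∈ chg n σ, a < b → r a < r b := by
    intro a ha b hb hab
    have h1 := (hr a ha).1
    have h2 := (hr b hb).1
    have : (a : ℝ) + 1 ≤ (b : ℝ) := by
      have : (a : ℕ) + 1 ≤ b := hab
      exact_mod_cast this
    calc r a < (a : ℝ) + 1 := h1.2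
      _ ≤ (b : ℝ) := this
      _ < r b := h2.1
  have hinj : Set.InjOn r (chg n σ) := by
    intro a ha b hb hab
    rcases lt_trichotomy a b with h | h | h
    · exact absurd hab (ne_of_lt (hmono a ha b hb h))
    · exact h
    · exact absurd hab.symm (ne_of_lt (hmono b hb a ha h))
  have hcard' : d < ((chg n σ).image r).card := by
    rw [Finset.card_image_of_injOn hinj]
    exact hcard
  have hzero : ∀ y ∈ (chg n σ).image r, P.eval y = 0 := by
    intro y hy
    obtain ⟨k, hk, rfl⟩ := Finset.mem_image.mp hy
    exact (hr k hk).2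
  have hP0 : P = 0 :=
    Polynomial.eq_zero_of_natDegree_lt_card_of_eval_eq_zero' P _ hzero
      (lt_of_le_of_lt hPdeg hcard')
  have : P.eval 0 = 0 := by rw [hP0]; simp
  rw [hPeval 0, F_zero] at this
  norm_num at this


lemma nonempty_Rg {d n : ℕ} {T : Finset ℕ} (hc : T.card ≤ d) :
    (Rg d n (fun i => par T ((i : ℕ) + 1))).Nonempty := by
  classical
  set ρ : ℕ → ℝ := fun k => (k : ℝ) + 1/2 with hρ
  have hρpos : ∀ k : ℕ, 0 < ρ k := by
    intro k
    have : (0 : ℝ) ≤ (k : ℝ) := Nat.cast_nonneg k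
    simp only [hρ]; linarith
  set Q : Polynomial ℝ := Polynomial.C (-1) *
      ∏ k ∈ T, (Polynomial.C (ρ k)⁻¹ * (Polynomial.C (ρ k) - Polynomial.X)) with hQ
  have hQeval : ∀ s : ℝ, Q.eval s = -∏ k ∈ T, (ρ k)⁻¹ * (ρ k - s) := by
    intro s
    simp [hQ, Polynomial.eval_prod]
  have hQdeg : Q.natDegree ≤ d := by
    refine le_trans (Polynomial.natDegree_mul_le) ?_
    simp only [Polynomial.natDegree_C, zero_add]
    refine le_trans (Polynomial.natDegree_prod_le _ _) (le_trans ?_ hc)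
    rw [Finset.card_eq_sum_ones T]
    apply Finset.sum_le_sum
    intro k _
    refine le_trans (Polynomial.natDegree_mul_le) ?_
    simp only [Polynomial.natDegree_C, zero_add]
    exact le_trans (Polynomial.natDegree_sub_le _ _) (by simp)
  have hQ0 : Q.coeff 0 = -1 := by
    rw [Polynomial.coeff_zero_eq_eval_zero, hQeval]
    have : ∏ k ∈ T, (ρ k)⁻¹ * (ρ k - 0) = 1 := by
      apply Finset.prod_eq_one
      intro k _
      rw [sub_zero]
      exact inv_mul_cancel₀ (ne_of_gt (hρpos k))
    rw [this]
  set x : Fin d → ℝ := fun j => Q.coeff ((j : ℕ) + 1) with hx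
  have hFQ : ∀ s : ℝ, F d x s = Q.eval s := by
    intro s
    rw [Polynomial.eval_eq_sum_range' (Nat.lt_succ_of_le hQdeg), Finset.sum_range_succ']
    simp only [pow_zero, mul_one, hQ0]
    rw [F]
    have hsum : ∑ j : Fin d, x j * s ^ ((j : ℕ) + 1) =
        ∑ j ∈ Finset.range d, Q.coeff (j + 1) * s ^ (j + 1) := by
      rw [← Fin.sum_univ_eq_sum_range (fun j => Q.coeff (j + 1) * s ^ (j + 1)) d]
    rw [hsum]
    ring
  have hsign : ∀ m : ℕ, (if par T m then 0 < Q.eval (m : ℝ) else Q.eval (m : ℝ) < 0) := by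
    intro m
    rw [hQeval]
    have hsplit := Finset.prod_filter_mul_prod_filter_not T (fun k => k < m)
      (fun k => (ρ k)⁻¹ * (ρ k - (m : ℝ)))
    have h2pos : 0 < ∏ k ∈ T.filter (fun k => ¬ k < m), (ρ k)⁻¹ * (ρ k - (m : ℝ)) := by
      apply Finset.prod_pos
      intro k hk
      have hmk : m ≤ k := le_of_not_gt (Finset.mem_filter.mp hk).2
      have : (m : ℝ) ≤ (k : ℝ) := by exact_mod_cast hmk
      have : (m : ℝ) < ρ k := by simp only [hρ]; linarith
      exact mul_pos (inv_pos.mpr (hρpos k)) (by linarith)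
    have h1eq : ∏ k ∈ T.filter (· < m), (ρ k)⁻¹ * (ρ k - (m : ℝ)) =
        (-1) ^ (T.filter (· < m)).card * ∏ k ∈ T.filter (· < m), (ρ k)⁻¹ * ((m : ℝ) - ρ k) := by
      rw [← Finset.prod_const, ← Finset.prod_mul_distrib]
      apply Finset.prod_congr rfl
      intro k _
      ring
    have h1pos : 0 < ∏ k ∈ T.filter (· < m), (ρ k)⁻¹ * ((m : ℝ) - ρ k) := by
      apply Finset.prod_pos
      intro k hk
      have hkm : k < m := (Finset.mem_filter.mp hk).2
      have h1 : (k : ℝ) + 1 ≤ (m : ℝ) := by exact_mod_cast hkm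
      have : ρ k < (m : ℝ) := by simp only [hρ]; linarith
      exact mul_pos (inv_pos.mpr (hρpos k)) (by linarith)
    have hcnt : cnt T m = (T.filter (· < m)).card := rfl
    by_cases hodd : Odd (cnt T m)
    · have hpar : par T m = true := by simp [par, hodd]
      rw [hpar, if_pos rfl]
      have hneg : (-1 : ℝ) ^ (T.filter (· < m)).card = -1 := Odd.neg_one_pow (hcnt ▸ hodd)
      have hprod : ∏ k ∈ T, (ρ k)⁻¹ * (ρ k - (m : ℝ)) =
          -((∏ k ∈ T.filter (· < m), (ρ k)⁻¹ * ((m : ℝ) - ρ k)) *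
            ∏ k ∈ T.filter (fun k => ¬ k < m), (ρ k)⁻¹ * (ρ k - (m : ℝ))) := by
        rw [← hsplit, h1eq, hneg]; ring
      rw [hprod]
      have := mul_pos h1pos h2pos
      linarith
    · have hpar : par T m = false := by simp [par, hodd]
      rw [hpar, if_neg Bool.false_ne_true]
      have heven : Even ((T.filter (· < m)).card) := hcnt ▸ (Nat.not_odd_iff_even.mp hodd)
      have hpos1 : (-1 : ℝ) ^ (T.filter (· < m)).card = 1 := Even.neg_one_pow heven
      have hprod : ∏ k ∈ T, (ρ k)⁻¹ * (ρ k - (m : ℝ)) =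
          (∏ k ∈ T.filter (· < m), (ρ k)⁻¹ * ((m : ℝ) - ρ k)) *
            ∏ k ∈ T.filter (fun k => ¬ k < m), (ρ k)⁻¹ * (ρ k - (m : ℝ)) := by
        rw [← hsplit, h1eq, hpos1]; ring
      rw [hprod]
      have := mul_pos h1pos h2pos
      linarith
  refine ⟨x, ?_⟩
  rw [mem_Rg]
  intro i
  have hs := hsign ((i : ℕ) + 1)
  have hF := F_cast d n i x
  rw [hFQ] at hF
  split_ifs at hs ⊢ with h
  · rw [hF] at hs; linarith
  · rw [hF] at hs; linarith


open Finset Set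

lemma sgn_continuous (d n : ℕ) :
    Continuous (fun z : ↥(Sset d n) => sgn d n z.1) := by
  apply continuous_pi
  intro i
  apply IsLocallyConstant.continuous
  rw [IsLocallyConstant.iff_isOpen_fiber]
  intro y
  have hc : Continuous (fun z : ↥(Sset d n) => fmap d n i z.1) :=
    (fmap d n i).continuous_of_finiteDimensional.comp continuous_subtype_val
  cases y with
  | true =>
    have : ((fun z : ↥(Sset d n) => sgn d n z.1 i) ⁻¹' {true}) =
        ((fun z : ↥(Sset d n) => fmap d n i z.1) ⁻¹' (Set.Ioi 1)) := by
      ext z; simp [sgn, Set.mem_Ioi]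
    rw [this]
    exact isOpen_Ioi.preimage hc
  | false =>
    have : ((fun z : ↥(Sset d n) => sgn d n z.1 i) ⁻¹' {false}) =
        ((fun z : ↥(Sset d n) => fmap d n i z.1) ⁻¹' (Set.Iio 1)) := by
      ext z
      simp only [Set.mem_preimage, Set.mem_singleton_iff, Set.mem_Iio, sgn,
        decide_eq_false_iff_not, not_lt]
      constructor
      · intro h; exact lt_of_le_of_ne h (z.2 i)
      · intro h; exact le_of_lt h
    rw [this]
    exact isOpen_Iio.preimage hc

lemma same_component {d n : ℕ} {σ : Fin n → Bool} (z w : ↥(Sset d n))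
    (hz : z.1 ∈ Rg d n σ) (hw : w.1 ∈ Rg d n σ) :
    (z : ConnectedComponents ↥(Sset d n)) = w := by
  set u : Set ↥(Sset d n) := Subtype.val ⁻¹' Rg d n σ with hu
  have himg : Subtype.val '' u = Rg d n σ := by
    rw [hu, Subtype.image_preimage_coe]
    exact Set.inter_eq_self_of_subset_right (Rg_subset_Sset d n σ)
  have hpre : IsPreconnected u := by
    rw [← Topology.IsInducing.subtypeVal.isPreconnected_image, himg]
    exact Rg_preconnected d n σ
  have hzu : z ∈ u := hz
  have hwu : w ∈ u := hw
  have hsub := hpre.subset_connectedComponent hwu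
  rw [ConnectedComponents.coe_eq_coe']
  exact hsub hzu

lemma card_components (d n : ℕ) :
    Nat.card (ConnectedComponents ↥(Sset d n)) =
      Nat.card {σ : Fin n → Bool // (Rg d n σ).Nonempty} := by
  classical
  have hφ := (sgn_continuous d n).connectedComponentsLift_apply_coe
  set φ := (sgn_continuous d n).connectedComponentsLift with hφdef
  refine (Nat.card_eq_of_bijective
    (fun p : {σ : Fin n → Bool // (Rg d n σ).Nonempty} =>
      ((⟨p.2.choose, Rg_subset_Sset d n p.1 p.2.choose_spec⟩ : ↥(Sset d n)) :
        ConnectedComponents ↥(Sset d n))) ⟨?_, ?_⟩).symm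
  · intro p q hpq
    have hp : φ _ = φ _ := congrArg φ hpq
    rw [hφ, hφ] at hp
    have h1 : sgn d n p.2.choose = p.1 := sgn_eq_of_mem p.2.choose_spec
    have h2 : sgn d n q.2.choose = q.1 := sgn_eq_of_mem q.2.choose_spec
    exact Subtype.ext (h1 ▸ h2 ▸ hp)
  · intro C
    obtain ⟨z, rfl⟩ := ConnectedComponents.surjective_coe C
    have hz : z.1 ∈ Rg d n (sgn d n z.1) := mem_Rg_sgn z.2
    refine ⟨⟨sgn d n z.1, ⟨z.1, hz⟩⟩, ?_⟩
    exact same_component _ z (Exists.choose_spec (⟨z.1, hz⟩ : (Rg d n (sgn d n z.1)).Nonempty)) hz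


noncomputable def regionEquiv (d n : ℕ) :
    {σ : Fin n → Bool // (Rg d n σ).Nonempty} ≃
      {T : Finset ℕ // T ⊆ range n ∧ T.card ≤ d} where
  toFun p := ⟨chg n p.1, chg_subset p.1, card_chg_le p.2⟩
  invFun q := ⟨fun i => par q.1 ((i : ℕ) + 1), nonempty_Rg q.2.2⟩
  left_inv p := by
    apply Subtype.ext
    funext i
    show par (chg n p.1) ((i : ℕ) + 1) = p.1 i
    rw [par_chg p.1 _ i.isLt, sig_fin]
  right_inv q := by
    apply Subtype.ext
    exact chg_par q.2.1

end PhiArr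

/-- for every `d ≥ 1` and `n ≥ 0` there is a family of `n` affine
hyperplanes `{x : f_i(x) = c_i}` in `ℝ^d` whose complement has exactly `Φ(n, d)`
connected components; hence the maximal number of linear regions of a width-`n`
dense ReLU layer on `ℝ^d` is at least `Φ(n, d)`, i.e. the upper bound `Φ(n, d)`
is attained. -/
theorem exists_arrangement_exactly_Phi (d n : ℕ) (hd : 1 ≤ d) :
    ∃ (f : Fin n → ((Fin d → ℝ) →ₗ[ℝ] ℝ)) (c : Fin n → ℝ),
      (∀ i, f i ≠ 0) ∧
      numComponents ((Set.univ : Set (Fin d → ℝ)) \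
          ⋃ i : Fin n, {x : Fin d → ℝ | f i x = c i}) = Phi n d := by
  refine ⟨PhiArr.fmap d n, fun _ => 1, ?_, ?_⟩
  · intro i hzero
    have h1 : PhiArr.fmap d n i (Pi.single (⟨0, hd⟩ : Fin d) 1) =
        (((i : ℕ) : ℝ) + 1) ^ (0 + 1) := by
      rw [PhiArr.fmap_apply]
      rw [Finset.sum_eq_single (⟨0, hd⟩ : Fin d)]
      · simp
      · intro j _ hj
        rw [Pi.single_apply, if_neg hj, mul_zero]
      · intro h
        exact absurd (Finset.mem_univ _) h
    rw [hzero] at h1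
    simp only [LinearMap.zero_apply] at h1
    have : (0 : ℝ) < ((i : ℕ) : ℝ) + 1 := by positivity
    rw [pow_one] at h1
    linarith [h1]
  · have hset : ((Set.univ : Set (Fin d → ℝ)) \
        ⋃ i : Fin n, {x : Fin d → ℝ | PhiArr.fmap d n i x = 1}) = PhiArr.Sset d n := by
      ext x
      simp [PhiArr.Sset]
    rw [numComponents, hset, PhiArr.card_components d n,
      Nat.card_congr (PhiArr.regionEquiv d n)]
    exact PhiArr.card_subtype n d
end

section
/- There exist N ≥ 3, k with 2 ≤ k < N, d ≥ 1, affine maps z_1, …, z_N : ℝ^d → ℝ, and an expert index e ∈ {1, …, N} such that the aggregate region served by expert e, namely the union ⋃ {V(I) : I ⊆ {1, …, N}, |I| = k, e ∈ I} of the Top-k routing cells containing e, is not a convex subset of ℝ^d (even though each individual cell V(I) is convex). -/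
noncomputable def proj1 : (Fin 1 → ℝ) →ᵃ[ℝ] ℝ :=
  (LinearMap.proj 0 : (Fin 1 → ℝ) →ₗ[ℝ] ℝ).toAffineMap

noncomputable def myz : Fin 3 → ((Fin 1 → ℝ) →ᵃ[ℝ] ℝ) :=
  ![AffineMap.const ℝ (Fin 1 → ℝ) 0, proj1, AffineMap.const ℝ (Fin 1 → ℝ) 1 - proj1]

lemma cell_convex {N d : ℕ} (z : Fin N → ((Fin d → ℝ) →ᵃ[ℝ] ℝ)) (k : ℕ)
    (I : Finset (Fin N)) : Convex ℝ (cell z k I) := by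
  intro x hx y hy a b ha hb hab
  intro J hJ
  have key : ∀ i : Fin N, z i (a • x + b • y) = a • z i x + b • z i y := fun i =>
    Convex.combo_affine_apply hab
  simp only [key, Finset.sum_add_distrib, smul_eq_mul, ← Finset.mul_sum]
  exact add_le_add (mul_le_mul_of_nonneg_left (hx J hJ) ha)
    (mul_le_mul_of_nonneg_left (hy J hJ) hb)

/-- there exist `N ≥ 3`, `2 ≤ k < N`, `d ≥ 1`, affine logits
`z_1, …, z_N` and an expert index `e` such that, although each individual Top-k
routing cell `V(I)` is convex, the aggregate region served by expert `e`, namely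
the union of the cells `V(I)` over the `k`-subsets `I` containing `e`, is not
convex. -/
theorem expert_region_not_convex :
    ∃ (N k d : ℕ), 3 ≤ N ∧ 2 ≤ k ∧ k < N ∧ 1 ≤ d ∧
      ∃ (z : Fin N → ((Fin d → ℝ) →ᵃ[ℝ] ℝ)) (e : Fin N),
        (∀ I : Finset (Fin N), I.card = k → Convex ℝ (cell z k I)) ∧
        ¬ Convex ℝ
          (⋃ I ∈ {I : Finset (Fin N) | I.card = k ∧ e ∈ I}, cell z k I) := by
  refine ⟨3, 2, 1, le_refl _, le_refl _, by norm_num, le_refl _, myz, 0,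
    fun I _ => cell_convex myz 2 I, ?_⟩
  intro hconv
  -- the point 0 belongs to the cell of {0,2}
  have h0 : (fun _ => (0:ℝ)) ∈ cell myz 2 ({0,2} : Finset (Fin 3)) := by
    intro J hJ
    fin_cases J <;> simp_all <;> norm_num [myz, proj1, Matrix.cons_val_two, Matrix.tail_cons]
  -- the point 1 belongs to the cell of {0,1}
  have h1 : (fun _ => (1:ℝ)) ∈ cell myz 2 ({0,1} : Finset (Fin 3)) := by
    intro J hJ
    fin_cases J <;> simp_all <;> norm_num [myz, proj1, Matrix.cons_val_two, Matrix.tail_cons]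
  set S := (⋃ I ∈ {I : Finset (Fin 3) | I.card = 2 ∧ (0:Fin 3) ∈ I}, cell myz 2 I)
  have hx : (fun _ => (0:ℝ)) ∈ S := by
    refine Set.mem_biUnion ?_ h0
    simp
  have hy : (fun _ => (1:ℝ)) ∈ S := by
    refine Set.mem_biUnion ?_ h1
    simp
  have hmid := hconv hx hy (by norm_num : (0:ℝ) ≤ 1/2) (by norm_num : (0:ℝ) ≤ 1/2)
    (by norm_num)
  have hmid' : (fun _ => (1/2 : ℝ)) ∈ S := by
    convert hmid using 1
    funext i
    norm_num
  rw [Set.mem_iUnion₂] at hmid'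
  obtain ⟨I, ⟨hcard, hmem⟩, hI⟩ := hmid'
  have := hI {1, 2} (by decide)
  have hsum12 : ∑ j ∈ ({1,2} : Finset (Fin 3)), myz j (fun _ => (1/2:ℝ)) = 1 := by
    simp [myz, proj1, Fin.sum_univ_succ]
  rw [hsum12] at this
  -- Now show ∑ i ∈ I, myz i (1/2) < 1 since 0 ∈ I and I.card = 2
  have : ∑ i ∈ I, myz i (fun _ => (1/2:ℝ)) ≤ 1/2 := by
    fin_cases I <;> simp_all <;> norm_num [myz, proj1, Matrix.cons_val_two, Matrix.tail_cons]
  linarith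
end
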